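/- arXiv:2307.07806 — 2 statements merged into one kernel-verified Lean document; each statement's English description precedes it below -/
import Mathlib

section
/- (Theorem 1, direction 𝓢₀ ⊆ 𝓢_HT.) Let n > K ≥ 1 and L ≥ 1. Let z_1,…,z_K ∈ ℂ be pairwise distinct with |z_k| = 1, let b ∈ ℝ^K with b_k > 0, and let Φ ∈ ℂ^{K×L} with |Φ_{k,l}| = 1 for all k,l. Let X ∈ ℂ^{(2n−1)×L} have entries X_{j,l} = Σ_{k=1}^K b_k Φ_{k,l} z_k^{j−1}. Then there exists t ∈ ℂ^n, namely t_j = Σ_{k=1}^K b_k z_k^{j−1}, such that for every l = 1,…,L the block matrix 𝓜(X_{:,l}, t) is positive semidefinite and rank(𝓜(X_{:,l}, t)) = rank(𝓣t) ≤ K. -/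
open Matrix
open scoped ComplexOrder

/-- The Hankel operator: maps `x ∈ ℂ^(2n-1)` to the `n × n` matrix with
`(𝓗x)_{i,j} = x_{i+j-1}` (1-based indexing). -/
noncomputable def hankelOp (n : ℕ) (x : Fin (2 * n - 1) → ℂ) :
    Matrix (Fin n) (Fin n) ℂ :=
  Matrix.of fun i j => x ⟨i.val + j.val, by have hi := i.isLt; have hj := j.isLt; omega⟩

/-- The Hermitian Toeplitz operator: maps `t ∈ ℂ^n` to the `n × n` matrix with
`(𝓣t)_{i,j} = t_{i-j+1}` for `i ≥ j` and `(𝓣t)_{i,j} = conj (t_{j-i+1})` for `i < j`. -/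
noncomputable def toeplitzOp (n : ℕ) (t : Fin n → ℂ) : Matrix (Fin n) (Fin n) ℂ :=
  Matrix.of fun i j =>
    if j.val ≤ i.val then t ⟨i.val - j.val, by have hi := i.isLt; omega⟩
    else star (t ⟨j.val - i.val, by have hj := j.isLt; omega⟩)

/-- The `2n × 2n` Hankel-Toeplitz block matrix `𝓜(x,t) = [[𝓣(conj t), 𝓗(conj x)],[𝓗x, 𝓣t]]`. -/
noncomputable def blockM (n : ℕ) (x : Fin (2 * n - 1) → ℂ) (t : Fin n → ℂ) :
    Matrix (Fin n ⊕ Fin n) (Fin n ⊕ Fin n) ℂ :=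
  Matrix.fromBlocks (toeplitzOp n fun j => star (t j)) (hankelOp n fun j => star (x j))
    (hankelOp n x) (toeplitzOp n t)

/-! With `V` the `n × K` matrix of powers `z_k ^ i` and `D = diag b`, one has `𝓣t = V D Vᴴ`
(this uses `|z_k| = 1`, so that `z_k ^ (i - j) = z_k ^ i * conj z_k ^ j`) and
`𝓗x = V diag(b Φ_l) Vᵀ`. Together with `|Φ_{k,l}| = 1` this gives `𝓜(X_{:,l}, t) = W D Wᴴ`
for the stacked matrix `W = [conj V · diag(conj Φ_l); V]`. Hence `𝓜` is positive semidefinite,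
and since `D > 0` both ranks equal `rank V = rank W = K`: the top `K × K` block of `V` is a
Vandermonde matrix at distinct nodes. -/

section MulDiagonalMulConjTranspose

variable {𝕜 m ι : Type*} [RCLike 𝕜] [Fintype m] [Fintype ι] [DecidableEq ι]

theorem Matrix.posSemidef_mul_diagonal_mul_conjTranspose (B : Matrix m ι 𝕜) {d : ι → 𝕜}
    (hd : ∀ k, 0 ≤ d k) : (B * diagonal d * Bᴴ).PosSemidef :=
  (posSemidef_diagonal_iff.mpr hd).mul_mul_conjTranspose_same B

theorem Matrix.rank_mul_diagonal_mul_conjTranspose (B : Matrix m ι 𝕜) {d : ι → 𝕜}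
    (hd : ∀ k, 0 < d k) : (B * diagonal d * Bᴴ).rank = B.rank := by
  choose r hr hrd using fun k => RCLike.pos_iff_exists_ofReal.mp (hd k)
  set S : Matrix ι ι 𝕜 := diagonal fun k => (√(r k) : 𝕜)
  have hS : diagonal d = S * Sᴴ := by
    simp only [S, diagonal_conjTranspose, diagonal_mul_diagonal, Pi.star_apply,
      RCLike.star_def, RCLike.conj_ofReal, ← RCLike.ofReal_mul, Real.mul_self_sqrt (hr _).le, hrd]
  have hSdet : IsUnit S.det := by
    simp only [S, det_diagonal, isUnit_iff_ne_zero, Finset.prod_ne_zero_iff, ne_eq,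
      RCLike.ofReal_eq_zero, Real.sqrt_eq_zero', not_le]
    exact fun k _ => hr k
  rw [hS, ← Matrix.mul_assoc, Matrix.mul_assoc (B * S), ← conjTranspose_mul,
    rank_self_mul_conjTranspose, rank_mul_eq_left_of_isUnit_det _ _ hSdet]

end MulDiagonalMulConjTranspose

theorem Matrix.rank_le_rank_fromRows_right {R m₁ m₂ n : Type*} [CommSemiring R]
    [StrongRankCondition R] [Fintype n] (A₁ : Matrix m₁ n R) (A₂ : Matrix m₂ n R) :
    A₂.rank ≤ (fromRows A₁ A₂).rank :=
  rank_submatrix_le (fromRows A₁ A₂) Sum.inr id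

theorem RCLike.pow_sub_of_norm_eq_one {𝕜 : Type*} [RCLike 𝕜] {u : 𝕜} (hu : ‖u‖ = 1) {i j : ℕ}
    (hji : j ≤ i) :
    u ^ (i - j) = u ^ i * star u ^ j := by
  have hu' : u * star u = 1 := by
    rw [RCLike.star_def, RCLike.mul_conj, hu]; simp
  rw [← Nat.sub_add_cancel hji, pow_add, Nat.add_sub_cancel, mul_assoc, ← mul_pow, hu', one_pow,
    mul_one]

section PowMatrix

variable {ι : Type*}

def powMatrix (m : ℕ) (z : ι → ℂ) : Matrix (Fin m) ι ℂ :=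
  of fun i k => z k ^ (i : ℕ)

theorem powMatrix_conjTranspose (m : ℕ) (z : ι → ℂ) :
    (powMatrix m z)ᴴ = (powMatrix m (star z))ᵀ := by
  ext k i
  simp [powMatrix]

variable [Fintype ι] [DecidableEq ι]

theorem hankelOp_sum_pow (n : ℕ) (z c : ι → ℂ) :
    hankelOp n (fun j => ∑ k, c k * z k ^ (j : ℕ)) =
      powMatrix n z * diagonal c * (powMatrix n z)ᵀ := by
  ext i j
  rw [mul_apply]
  simp only [hankelOp, powMatrix, of_apply, mul_diagonal, transpose_apply, pow_add]
  exact Finset.sum_congr rfl fun k _ => by ring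

theorem toeplitzOp_sum_pow (n : ℕ) {z : ι → ℂ} (hz : ∀ k, ‖z k‖ = 1) (b : ι → ℝ) :
    toeplitzOp n (fun j => ∑ k, (b k : ℂ) * z k ^ (j : ℕ)) =
      powMatrix n z * diagonal (fun k => (b k : ℂ)) * (powMatrix n z)ᴴ := by
  ext i j
  rw [mul_apply]
  simp only [toeplitzOp, powMatrix, of_apply, mul_diagonal, conjTranspose_apply, star_pow]
  split_ifs with hji
  · refine Finset.sum_congr rfl fun k _ => ?_
    rw [RCLike.pow_sub_of_norm_eq_one (hz k) hji]
    ring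
  · rw [star_sum]
    refine Finset.sum_congr rfl fun k _ => ?_
    have hz' : ‖star (z k)‖ = 1 := by rw [norm_star, hz k]
    rw [star_mul', star_pow, RCLike.pow_sub_of_norm_eq_one hz' (by omega), star_star,
      Complex.star_def, Complex.conj_ofReal]
    ring

def blockMFactor (n : ℕ) (z φ : ι → ℂ) : Matrix (Fin n ⊕ Fin n) ι ℂ :=
  fromRows (powMatrix n (star z) * diagonal (star φ)) (powMatrix n z)

theorem blockM_sum_pow (n : ℕ) {z : ι → ℂ} (hz : ∀ k, ‖z k‖ = 1) (b : ι → ℝ) {φ : ι → ℂ}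
    (hφ : ∀ k, ‖φ k‖ = 1) :
    blockM n (fun j => ∑ k, (b k : ℂ) * φ k * z k ^ (j : ℕ))
        (fun j => ∑ k, (b k : ℂ) * z k ^ (j : ℕ)) =
      blockMFactor n z φ * diagonal (fun k => (b k : ℂ)) * (blockMFactor n z φ)ᴴ := by
  have hz' : ∀ k, ‖star z k‖ = 1 := fun k => by rw [Pi.star_apply, norm_star, hz k]
  have hstar_t : (fun j : Fin n => star (∑ k, (b k : ℂ) * z k ^ (j : ℕ))) =
      fun j : Fin n => ∑ k, (b k : ℂ) * star z k ^ (j : ℕ) := by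
    ext j; simp [star_sum]
  have hstar_x : (fun j : Fin (2 * n - 1) => star (∑ k, (b k : ℂ) * φ k * z k ^ (j : ℕ))) =
      fun j : Fin (2 * n - 1) => ∑ k, (b k : ℂ) * star φ k * star z k ^ (j : ℕ) := by
    ext j; simp [star_sum]
  have hb_φ : (fun k => star φ k * ((b k : ℂ) * φ k)) = fun k => (b k : ℂ) := by
    ext k
    rw [mul_left_comm, mul_comm (b k : ℂ), Pi.star_apply, RCLike.star_def, RCLike.conj_mul,
      hφ k]
    simp
  simp only [blockM, blockMFactor, hstar_t, hstar_x, toeplitzOp_sum_pow n hz,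
    toeplitzOp_sum_pow n hz', hankelOp_sum_pow, conjTranspose_fromRows_eq_fromCols_conjTranspose,
    fromRows_mul, mul_fromCols, fromCols_fromRows_eq_fromBlocks, Matrix.mul_assoc,
    conjTranspose_mul, diagonal_conjTranspose, powMatrix_conjTranspose, star_star]
  simp only [← Matrix.mul_assoc (diagonal _) (diagonal _), diagonal_mul_diagonal]
  rw [hb_φ]
  simp only [Pi.star_apply, mul_comm (star (φ _))]

end PowMatrix

theorem rank_powMatrix {K m : ℕ} {z : Fin K → ℂ} (hz : Function.Injective z) (hKm : K ≤ m) :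
    (powMatrix m z).rank = K := by
  refine le_antisymm (by simpa using (powMatrix m z).rank_le_card_width) ?_
  have hsub : (powMatrix m z).submatrix (Fin.castLE hKm) id = (vandermonde z)ᵀ := by
    ext i k
    simp [powMatrix, vandermonde]
  have hdet : IsUnit (vandermonde z)ᵀ.det := by
    rw [det_transpose, isUnit_iff_ne_zero]
    exact det_vandermonde_ne_zero_iff.mpr hz
  calc K = ((vandermonde z)ᵀ).rank := by
        rw [rank_of_isUnit _ ((isUnit_iff_isUnit_det _).mpr hdet), Fintype.card_fin]
    _ ≤ (powMatrix m z).rank := hsub ▸ rank_submatrix_le _ _ _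

theorem rank_blockMFactor {K n : ℕ} {z : Fin K → ℂ} (hz : Function.Injective z)
    (hKn : K ≤ n) (φ : Fin K → ℂ) : (blockMFactor n z φ).rank = K :=
  le_antisymm (by simpa using (blockMFactor n z φ).rank_le_card_width)
    ((rank_powMatrix hz hKn).symm.trans_le (rank_le_rank_fromRows_right _ _))

theorem S0_subset_SHT_general
    (n K L : ℕ) (hKn : K < n)
    (z : Fin K → ℂ) (hz : ∀ k, ‖z k‖ = 1)
    (hz' : Function.Injective z)
    (b : Fin K → ℝ) (hb : ∀ k, 0 < b k)
    (Φ : Matrix (Fin K) (Fin L) ℂ) (hΦ : ∀ k l, ‖Φ k l‖ = 1)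
    (X : Matrix (Fin (2 * n - 1)) (Fin L) ℂ)
    (hX : ∀ (j : Fin (2 * n - 1)) (l : Fin L),
      X j l = ∑ k : Fin K, (b k : ℂ) * Φ k l * z k ^ (j : ℕ)) :
    ∃ t : Fin n → ℂ,
      (∀ j : Fin n, t j = ∑ k : Fin K, (b k : ℂ) * z k ^ (j : ℕ)) ∧
      ∀ l : Fin L,
        (blockM n (fun j => X j l) t).PosSemidef ∧
        (blockM n (fun j => X j l) t).rank = (toeplitzOp n t).rank ∧
        (toeplitzOp n t).rank ≤ K := by
  refine ⟨fun j => ∑ k, (b k : ℂ) * z k ^ (j : ℕ), fun j => rfl, fun l => ?_⟩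
  have hb' : ∀ k, 0 < (b k : ℂ) := fun k => Complex.zero_lt_real.mpr (hb k)
  have hx : (fun j => X j l) =
      fun j : Fin (2 * n - 1) => ∑ k, (b k : ℂ) * Φ k l * z k ^ (j : ℕ) := funext (hX · l)
  have hT : (toeplitzOp n fun j => ∑ k, (b k : ℂ) * z k ^ (j : ℕ)).rank = K := by
    rw [toeplitzOp_sum_pow n hz b, rank_mul_diagonal_mul_conjTranspose _ hb',
      rank_powMatrix hz' hKn.le]
  rw [hx, blockM_sum_pow n hz b (hΦ · l), hT]
  exact ⟨posSemidef_mul_diagonal_mul_conjTranspose _ fun k => (hb' k).le,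
    (rank_mul_diagonal_mul_conjTranspose _ hb').trans (rank_blockMFactor hz' hKn.le _),
    le_rfl⟩

theorem S0_subset_SHT
    (n K L : ℕ) (hK : 1 ≤ K) (hKn : K < n) (hL : 1 ≤ L)
    (z : Fin K → ℂ) (hz : ∀ k, ‖z k‖ = 1)
    (hz' : Function.Injective z)
    (b : Fin K → ℝ) (hb : ∀ k, 0 < b k)
    (Φ : Matrix (Fin K) (Fin L) ℂ) (hΦ : ∀ k l, ‖Φ k l‖ = 1)
    (X : Matrix (Fin (2 * n - 1)) (Fin L) ℂ)
    (hX : ∀ (j : Fin (2 * n - 1)) (l : Fin L),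
      X j l = ∑ k : Fin K, (b k : ℂ) * Φ k l * z k ^ (j : ℕ)) :
    ∃ t : Fin n → ℂ,
      (∀ j : Fin n, t j = ∑ k : Fin K, (b k : ℂ) * z k ^ (j : ℕ)) ∧
      ∀ l : Fin L,
        (blockM n (fun j => X j l) t).PosSemidef ∧
        (blockM n (fun j => X j l) t).rank = (toeplitzOp n t).rank ∧
        (toeplitzOp n t).rank ≤ K :=
  S0_subset_SHT_general n K L hKn z hz hz' b hb Φ hΦ X hX
end

section
/- Let K ≥ K' ≥ 1, let b ∈ ℝ^{K'} with b_k > 0 for all k, and let S ∈ ℂ^{K'} with |S_k| ≤ b_k for all k. If the 2K'×2K' block matrix [[diag(b), diag(conj(S))],[diag(S), diag(b)]] has rank at most K, then the number of indices k with |S_k| < b_k is at most min(K', K − K'). -/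
/-!
The top-left block `diag b` is invertible, so by the Schur complement the rank of the block
matrix is `K'` plus the rank of the diagonal matrix `diag (b k - |S k|² / b k)`, whose nonzero
entries include every `k` with `|S k| < b k`.
-/

open Matrix
open scoped ComplexOrder

namespace Matrix

variable {m n K : Type*} [Fintype m] [Fintype n] [DecidableEq m] [DecidableEq n] [Field K]

theorem rank_fromBlocks_eq_of_invertible₁₁ (A : Matrix m m K) (B : Matrix m n K)
    (C : Matrix n m K) (D : Matrix n n K) [Invertible A] :
    (fromBlocks A B C D).rank = (fromBlocks A 0 0 (D - C * ⅟A * B)).rank := by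
  rw [fromBlocks_eq_of_invertible₁₁, rank_mul_eq_left_of_isUnit_det,
    rank_mul_eq_right_of_isUnit_det] <;> simp

theorem rank_fromBlocks_diagonal [DecidableEq K] (a c d e : m → K) (ha : ∀ i, a i ≠ 0) :
    (fromBlocks (diagonal a) (diagonal c) (diagonal d) (diagonal e)).rank =
      Fintype.card m + Fintype.card {i // e i - d i * c i / a i ≠ 0} := by
  let _ : Invertible (diagonal a) := ⟨diagonal a⁻¹, by simp [ha], by simp [ha]⟩
  have hschur : diagonal e - diagonal d * ⅟(diagonal a) * diagonal c =
      diagonal fun i => e i - d i * c i / a i := by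
    change _ - _ * diagonal a⁻¹ * _ = _
    simp only [diagonal_mul_diagonal, diagonal_sub, Pi.inv_apply, div_eq_mul_inv, mul_right_comm]
  rw [rank_fromBlocks_eq_of_invertible₁₁, hschur, fromBlocks_diagonal, rank_diagonal,
    Fintype.card_congr Equiv.subtypeSum, Fintype.card_sum]
  congr 1
  exact Fintype.card_congr (Equiv.subtypeUnivEquiv ha)

end Matrix

theorem Complex.ofReal_sub_mul_star_div_ne_zero_of_norm_lt {r : ℝ} {z : ℂ} (hz : ‖z‖ < r) :
    (r : ℂ) - z * star z / r ≠ 0 := by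
  have hr : (r : ℂ) ≠ 0 := ofReal_ne_zero.2 (norm_nonneg z |>.trans_lt hz).ne'
  rw [Complex.star_def, mul_conj, normSq_eq_norm_sq, sub_div' hr, div_ne_zero_iff]
  refine ⟨?_, hr⟩
  norm_cast
  nlinarith [norm_nonneg z]

theorem block_diag_rank_le_card_lt_general
    (K K' : ℕ)
    (b : Fin K' → ℝ) (hb : ∀ k, 0 < b k)
    (S : Fin K' → ℂ)
    (hrank : (Matrix.fromBlocks
      (Matrix.diagonal fun k => (b k : ℂ))
      (Matrix.diagonal fun k => star (S k))
      (Matrix.diagonal S)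
      (Matrix.diagonal fun k => (b k : ℂ))).rank ≤ K) :
    (Finset.univ.filter fun k => ‖S k‖ < b k).card ≤ min K' (K - K') := by
  classical
  rw [rank_fromBlocks_diagonal _ _ _ _ fun k => Complex.ofReal_ne_zero.2 (hb k).ne',
    Fintype.card_fin, Fintype.card_subtype] at hrank
  have hsub : (Finset.univ.filter fun k => ‖S k‖ < b k).card ≤
      (Finset.univ.filter fun k => (b k : ℂ) - S k * star (S k) / b k ≠ 0).card :=
    Finset.card_le_card <| Finset.monotone_filter_right _ fun _ _ =>
      Complex.ofReal_sub_mul_star_div_ne_zero_of_norm_lt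
  have hle : (Finset.univ.filter fun k => ‖S k‖ < b k).card ≤ K' :=
    (Finset.card_filter_le _ _).trans (Finset.card_fin K').le
  omega

theorem block_diag_rank_le_card_lt
    (K K' : ℕ) (hK' : 1 ≤ K') (hK : K' ≤ K)
    (b : Fin K' → ℝ) (hb : ∀ k, 0 < b k)
    (S : Fin K' → ℂ) (hS : ∀ k, ‖S k‖ ≤ b k)
    (hrank : (Matrix.fromBlocks
      (Matrix.diagonal fun k => (b k : ℂ))
      (Matrix.diagonal fun k => star (S k))
      (Matrix.diagonal S)
      (Matrix.diagonal fun k => (b k : ℂ))).rank ≤ K) :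
    (Finset.univ.filter fun k => ‖S k‖ < b k).card ≤ min K' (K - K') :=
  block_diag_rank_le_card_lt_general K K' b hb S hrank
end
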